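/- arXiv:math/9911125 — 6 statements merged into one kernel-verified Lean document; each statement's English description precedes it below -/
import Mathlib

section
/- If round j dominates round i, then for every natural number k, round j+k dominates round i+k. -/
open Finset

/-- Tie-retention synchronous majority update. -/
def majUpd {V : Type*} [Fintype V] [DecidableEq V] (G : SimpleGraph V)
    [DecidableRel G.Adj] (W : Finset V) : Finset V :=
  Finset.univ.filter fun v =>
    G.degree v < 2 * ((G.neighborFinset v) ∩ W).card ∨
      (G.degree v = 2 * ((G.neighborFinset v) ∩ W).card ∧ v ∈ W)

lemma majUpd_monotone {V : Type*} [Fintype V] [DecidableEq V] (G : SimpleGraph V)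
    [DecidableRel G.Adj] : Monotone (majUpd G) := by
  intro W W' hW v hv
  simp only [majUpd, mem_filter, mem_univ, true_and] at hv ⊢
  have hcard : #(G.neighborFinset v ∩ W) ≤ #(G.neighborFinset v ∩ W') :=
    card_le_card (inter_subset_inter_left hW)
  rcases hv with hlt | ⟨heq, hv⟩
  · exact Or.inl (by omega)
  · rcases hcard.lt_or_eq with hlt | hcard
    · exact Or.inl (by omega)
    · exact Or.inr ⟨by omega, hW hv⟩

/-- If round `j` dominates round `i`, then round `j+k` dominates round `i+k`. -/
theorem dominate_add {V : Type*} [Fintype V] [DecidableEq V] (G : SimpleGraph V)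
    [DecidableRel G.Adj] (W₀ : Finset V) (i j : ℕ)
    (h : (majUpd G)^[i] W₀ ⊆ (majUpd G)^[j] W₀) :
    ∀ k : ℕ, (majUpd G)^[i + k] W₀ ⊆ (majUpd G)^[j + k] W₀ := by
  intro k
  rw [add_comm i, add_comm j, Function.iterate_add_apply, Function.iterate_add_apply]
  exact (majUpd_monotone G).iterate k h
end

section
/- If the initial white set W_0 is finite, then for every r ≥ 1 the set T_r = W_r ∩ W_{r-1} of vertices white at both rounds r and r-1 is finite, and moreover every vertex in T_r has finite degree. -/
/-!
Write `W = W_{r-1}`, `W' = cardUpd G W = W_r` and `N = N(v)`. A vertex `v ∈ W'` that stays white in the next round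
while lying outside `W` satisfies `#(N \ W) < #(N ∩ W)` and `#(N \ W') ≤ #(N ∩ W')`. If `N`
met `W' ∩ W` only negligibly (not at all, or finitely while `N` is infinite), then
`N ∩ W ⊆ N \ W'` and `N ∩ W' ⊆ N \ W` up to that negligible part, and the four inequalities
would close into the contradiction `#(N ∩ W) < #(N ∩ W)`. Hence every vertex of
`T_{r+1} \ W_{r-1}` is a neighbour of the finite set `T_r` and has finite degree, so
`T_{r+1} ⊆ T_r ∪ N(T_r)` is finite. For `T_1 ⊆ W_0` both claims are immediate.
-/

open Cardinal

/-- Synchronous majority update by cardinality on a possibly infinite graph: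
a vertex is white next round iff its white neighbors strictly outnumber (in
cardinality) its black neighbors, or the two cardinalities are equal and the
vertex was white. -/
def cardUpd {V : Type*} (G : SimpleGraph V) (W : Set V) : Set V :=
  {v | #↥(G.neighborSet v \ W) < #↥(G.neighborSet v ∩ W) ∨
       (#↥(G.neighborSet v ∩ W) = #↥(G.neighborSet v \ W) ∧ v ∈ W)}

theorem Cardinal.le_of_le_add_of_lt_aleph0 {a b c : Cardinal} (h : a ≤ c + b) (hc : c < ℵ₀)
    (ha : ℵ₀ ≤ a) : a ≤ b := by
  rcases lt_or_ge b ℵ₀ with hb | hb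
  · exact absurd (h.trans_lt (add_lt_aleph0 hc hb)) ha.not_gt
  · rwa [add_eq_right hb (hc.le.trans hb)] at h

theorem Cardinal.mk_inter_le_mk_inter_add_mk_diff {α : Type*} (N X S : Set α) :
    #↥(N ∩ X) ≤ #↥(N ∩ (X ∩ S)) + #↥(N \ S) :=
  calc #↥(N ∩ X) ≤ #↥(N ∩ (X ∩ S) ∪ N \ S) :=
        mk_le_mk_of_subset fun x hx => by by_cases hS : x ∈ S <;> simp_all
    _ ≤ _ := mk_union_le _ _

namespace cardUpd

variable {V : Type*} {G : SimpleGraph V} {W : Set V} {v : V}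

theorem card_diff_le_card_inter (hv : v ∈ cardUpd G W) :
    #↥(G.neighborSet v \ W) ≤ #↥(G.neighborSet v ∩ W) := by
  rcases hv with h | ⟨h, -⟩
  · exact h.le
  · exact h.ge

theorem mem_of_card_inter_le_card_diff (hv : v ∈ cardUpd G W)
    (h : #↥(G.neighborSet v ∩ W) ≤ #↥(G.neighborSet v \ W)) : v ∈ W := by
  rcases hv with h' | ⟨-, h'⟩
  · exact absurd h' h.not_gt
  · exact h'

theorem neighborSet_finite (hv : v ∈ cardUpd G W) (hfin : (G.neighborSet v ∩ W).Finite) :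
    (G.neighborSet v).Finite := by
  have hdiff : (G.neighborSet v \ W).Finite := by
    rw [← lt_aleph0_iff_set_finite] at hfin ⊢
    exact (card_diff_le_card_inter hv).trans_lt hfin
  simpa only [Set.inter_union_sdiff] using hfin.union hdiff

theorem aleph0_le_card_inter (hv : v ∈ cardUpd G W) (hinf : (G.neighborSet v).Infinite) :
    ℵ₀ ≤ #↥(G.neighborSet v ∩ W) := by
  rw [← infinite_iff, Set.infinite_coe_iff]
  exact fun hfin => hinf (neighborSet_finite hv hfin)

theorem mem_of_mem_cardUpd_cardUpd {B : Set V} (h₁ : v ∈ cardUpd G B)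
    (h₂ : v ∈ cardUpd G (cardUpd G B))
    (hsmall : G.neighborSet v ∩ (cardUpd G B ∩ B) = ∅ ∨
      (G.neighborSet v ∩ (cardUpd G B ∩ B)).Finite ∧ (G.neighborSet v).Infinite) :
    v ∈ B := by
  set A := cardUpd G B
  set N := G.neighborSet v
  have absorb : ∀ {X : Set V}, v ∈ cardUpd G X → ∀ {b : Cardinal},
      #↥(N ∩ X) ≤ #↥(N ∩ (A ∩ B)) + b → #↥(N ∩ X) ≤ b := by
    intro X hX b h
    rcases hsmall with hempty | ⟨hfin, hinf⟩
    · simpa [hempty] using h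
    · exact le_of_le_add_of_lt_aleph0 h (lt_aleph0_iff_set_finite.2 hfin)
        (aleph0_le_card_inter hX hinf)
  have hBA : #↥(N ∩ B) ≤ #↥(N \ A) :=
    absorb h₁ (by simpa only [Set.inter_comm B A] using mk_inter_le_mk_inter_add_mk_diff N B A)
  have hAB : #↥(N ∩ A) ≤ #↥(N \ B) := absorb h₂ (mk_inter_le_mk_inter_add_mk_diff N A B)
  exact mem_of_card_inter_le_card_diff h₁ (hBA.trans ((card_diff_le_card_inter h₂).trans hAB))

theorem adj_and_neighborSet_finite {B : Set V} (hT : (cardUpd G B ∩ B).Finite)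
    (hv : v ∈ cardUpd G (cardUpd G B) ∩ cardUpd G B) (hvB : v ∉ B) :
    (∃ u ∈ cardUpd G B ∩ B, G.Adj u v) ∧ (G.neighborSet v).Finite := by
  obtain ⟨h₂, h₁⟩ := hv
  constructor
  · by_contra! hnone
    refine hvB (mem_of_mem_cardUpd_cardUpd h₁ h₂ (Or.inl ?_))
    exact Set.eq_empty_of_forall_notMem fun u ⟨hu, huT⟩ => hnone u huT (G.adj_symm hu)
  · by_contra hinf
    exact hvB (mem_of_mem_cardUpd_cardUpd h₁ h₂ (Or.inr ⟨hT.inter_of_right _, hinf⟩))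

theorem persistent_finite_of_finite (hW : W.Finite) :
    (cardUpd G W ∩ W).Finite ∧ ∀ v ∈ cardUpd G W ∩ W, (G.neighborSet v).Finite :=
  ⟨hW.inter_of_right _, fun _ hv => neighborSet_finite hv.1 (hW.inter_of_right _)⟩

theorem persistent_finite_step {B : Set V} (hT : (cardUpd G B ∩ B).Finite)
    (hdeg : ∀ u ∈ cardUpd G B ∩ B, (G.neighborSet u).Finite) :
    (cardUpd G (cardUpd G B) ∩ cardUpd G B).Finite ∧
      ∀ v ∈ cardUpd G (cardUpd G B) ∩ cardUpd G B, (G.neighborSet v).Finite := by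
  constructor
  · refine (hT.union (hT.biUnion hdeg)).subset fun v hv => ?_
    by_cases hvB : v ∈ B
    · exact Or.inl ⟨hv.2, hvB⟩
    · obtain ⟨u, huT, huv⟩ := (adj_and_neighborSet_finite hT hv hvB).1
      exact Or.inr (Set.mem_biUnion huT huv)
  · intro v hv
    by_cases hvB : v ∈ B
    · exact hdeg v ⟨hv.2, hvB⟩
    · exact (adj_and_neighborSet_finite hT hv hvB).2

end cardUpd

/-- If W₀ is finite then every Tᵣ = Wᵣ ∩ Wᵣ₋₁ is finite, and moreover every
vertex of Tᵣ has finite degree. -/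
theorem T_finite {V : Type*} (G : SimpleGraph V) (W₀ : Set V) (hfin : W₀.Finite) :
    ∀ r : ℕ,
      ((cardUpd G)^[r + 1] W₀ ∩ (cardUpd G)^[r] W₀).Finite ∧
      ∀ v ∈ (cardUpd G)^[r + 1] W₀ ∩ (cardUpd G)^[r] W₀,
        (G.neighborSet v).Finite := by
  intro r
  induction r with
  | zero => simpa using cardUpd.persistent_finite_of_finite hfin
  | succ r ih =>
    simp only [Function.iterate_succ_apply'] at ih ⊢
    exact cardUpd.persistent_finite_step ih.1 ih.2
end

section
/- No infinite graph has a finite dynamic monopoly: if G is an infinite graph and W_0 ⊆ V is finite, then there is no round r at which all vertices of G are white. -/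
open Cardinal

/-!
Call a vertex stable if it is white in two consecutive rounds. Starting from a finite white
set, the stable set stays finite and consists of vertices of finite degree. A vertex stable
at the next round was either stable already or, being newly white and then still white, has
a stable neighbour. Nor can it have infinite degree: its neighbours white at the next round
would then be as many as all of them, and all but finitely many of those were black before,
so the white ones could not have been the strict majority that made it white. An all-white
round would make every vertex stable, hence the vertex set finite.
-/

namespace Set

variable {α : Type*} {X W : Set α}

theorem finite_of_mk_sdiff_le_mk_inter (hXW : (X ∩ W).Finite)
    (h : #↥(X \ W) ≤ #↥(X ∩ W)) : X.Finite := by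
  have hdiff : (X \ W).Finite :=
    lt_aleph0_iff_set_finite.mp (h.trans_lt (lt_aleph0_iff_set_finite.mpr hXW))
  simpa only [inter_union_sdiff] using hXW.union hdiff

theorem mk_le_mk_inter_of_mk_sdiff_le (hX : X.Infinite) (h : #↥(X \ W) ≤ #↥(X ∩ W)) :
    #↥X ≤ #↥(X ∩ W) := by
  have hXW : ℵ₀ ≤ #↥(X ∩ W) :=
    infinite_iff.mp (infinite_coe_iff.mpr fun hfin ↦ hX (finite_of_mk_sdiff_le_mk_inter hfin h))
  calc #↥X = #↥(X ∩ W ∪ X \ W) := by rw [inter_union_sdiff]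
    _ ≤ #↥(X ∩ W) + #↥(X \ W) := mk_union_le _ _
    _ = #↥(X ∩ W) := add_eq_left hXW h

theorem mk_le_mk_sdiff_of_finite {S : Set α} (hX : X.Infinite) (hS : S.Finite) :
    #↥X ≤ #↥(X \ S) := by
  have hXS : ℵ₀ ≤ #↥(X \ S) := infinite_iff.mp (infinite_coe_iff.mpr (hX.sdiff hS))
  calc #↥X ≤ #↥(X \ S) + #↥S := le_mk_sdiff_add_mk X S
    _ = #↥(X \ S) := add_eq_left hXS ((lt_aleph0_iff_set_finite.mpr hS).le.trans hXS)

end Set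

section MajorityDynamics

variable {V : Type*} {G : SimpleGraph V} {W : Set V} {v : V}

theorem mk_neighborSet_sdiff_le_of_mem_cardUpd (h : v ∈ cardUpd G W) :
    #↥(G.neighborSet v \ W) ≤ #↥(G.neighborSet v ∩ W) := by
  rcases h with h | ⟨h, -⟩
  exacts [h.le, h.ge]

theorem mk_neighborSet_sdiff_lt_of_mem_cardUpd (h : v ∈ cardUpd G W) (hv : v ∉ W) :
    #↥(G.neighborSet v \ W) < #↥(G.neighborSet v ∩ W) := by
  rcases h with h | ⟨-, hvW⟩
  exacts [h, absurd hvW hv]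

theorem cardUpd_univ : cardUpd G Set.univ = Set.univ := by
  refine Set.eq_univ_of_forall fun v ↦ ?_
  simp only [cardUpd, Set.sdiff_univ, Set.inter_univ, mk_eq_zero, Set.mem_univ,
    and_true, Set.mem_ofPred_eq]
  exact zero_le.lt_or_eq.imp_right Eq.symm

theorem finite_neighborSet_of_mem_cardUpd (hW : W.Finite) (h : v ∈ cardUpd G W) :
    (G.neighborSet v).Finite :=
  Set.finite_of_mk_sdiff_le_mk_inter (hW.inter_of_right _)
    (mk_neighborSet_sdiff_le_of_mem_cardUpd h)

variable (G) in
def stable (W : Set V) : Set V := W ∩ cardUpd G W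

theorem exists_adj_mem_stable (hv₀ : v ∉ W) (hv₁ : v ∈ cardUpd G W)
    (hv₂ : v ∈ cardUpd G (cardUpd G W)) : ∃ u ∈ stable G W, G.Adj v u := by
  by_contra! hnone
  set N := G.neighborSet v
  have hsub₁ : N ∩ W ⊆ N \ cardUpd G W := fun u hu ↦ ⟨hu.1, fun hu₁ ↦ hnone u ⟨hu.2, hu₁⟩ hu.1⟩
  have hsub₂ : N ∩ cardUpd G W ⊆ N \ W := fun u hu ↦ ⟨hu.1, fun hu₀ ↦ hnone u ⟨hu₀, hu.2⟩ hu.1⟩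
  have := calc #↥(N ∩ W) ≤ #↥(N \ cardUpd G W) := mk_le_mk_of_subset hsub₁
    _ ≤ #↥(N ∩ cardUpd G W) := mk_neighborSet_sdiff_le_of_mem_cardUpd hv₂
    _ ≤ #↥(N \ W) := mk_le_mk_of_subset hsub₂
    _ < #↥(N ∩ W) := mk_neighborSet_sdiff_lt_of_mem_cardUpd hv₁ hv₀
  exact this.false

theorem stable_cardUpd_subset :
    stable G (cardUpd G W) ⊆ stable G W ∪ ⋃ u ∈ stable G W, G.neighborSet u := by
  rintro v ⟨hv₁, hv₂⟩
  by_cases hv₀ : v ∈ W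
  · exact Or.inl ⟨hv₀, hv₁⟩
  · obtain ⟨u, hu, hvu⟩ := exists_adj_mem_stable hv₀ hv₁ hv₂
    exact Or.inr (Set.mem_biUnion hu hvu.symm)

theorem finite_neighborSet_of_mem_stable_cardUpd (hS : (stable G W).Finite)
    (hdeg : ∀ u ∈ stable G W, (G.neighborSet u).Finite) (hv : v ∈ stable G (cardUpd G W)) :
    (G.neighborSet v).Finite := by
  obtain ⟨hv₁, hv₂⟩ := hv
  by_contra hN
  set N := G.neighborSet v
  have hv₀ : v ∉ W := fun hv₀ ↦ hN (hdeg v ⟨hv₀, hv₁⟩)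
  have hN₁ : (N ∩ cardUpd G W).Infinite := fun hfin ↦
    hN (Set.finite_of_mk_sdiff_le_mk_inter hfin (mk_neighborSet_sdiff_le_of_mem_cardUpd hv₂))
  have hsub : (N ∩ cardUpd G W) \ stable G W ⊆ N \ W :=
    fun u ⟨⟨huN, hu₁⟩, hu⟩ ↦ ⟨huN, fun hu₀ ↦ hu ⟨hu₀, hu₁⟩⟩
  have := calc #↥(N ∩ W) ≤ #↥N := mk_le_mk_of_subset Set.inter_subset_left
    _ ≤ #↥(N ∩ cardUpd G W) :=
      Set.mk_le_mk_inter_of_mk_sdiff_le hN (mk_neighborSet_sdiff_le_of_mem_cardUpd hv₂)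
    _ ≤ #↥((N ∩ cardUpd G W) \ stable G W) :=
      Set.mk_le_mk_sdiff_of_finite hN₁ hS
    _ ≤ #↥(N \ W) := mk_le_mk_of_subset hsub
    _ < #↥(N ∩ W) := mk_neighborSet_sdiff_lt_of_mem_cardUpd hv₁ hv₀
  exact this.false

variable (G) in
def FiniteWithFiniteDegrees (S : Set V) : Prop :=
  S.Finite ∧ ∀ v ∈ S, (G.neighborSet v).Finite

theorem finiteWithFiniteDegrees_stable_of_finite (hW : W.Finite) :
    FiniteWithFiniteDegrees G (stable G W) :=
  ⟨hW.subset Set.inter_subset_left, fun _ hv ↦ finite_neighborSet_of_mem_cardUpd hW hv.2⟩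

theorem FiniteWithFiniteDegrees.stable_cardUpd (h : FiniteWithFiniteDegrees G (stable G W)) :
    FiniteWithFiniteDegrees G (stable G (cardUpd G W)) :=
  ⟨(h.1.union (h.1.biUnion h.2)).subset stable_cardUpd_subset,
    fun _ ↦ finite_neighborSet_of_mem_stable_cardUpd h.1 h.2⟩

end MajorityDynamics

/-- No infinite graph has a finite dynamic monopoly. -/
theorem no_finite_dynamo_infinite {V : Type*} [Infinite V] (G : SimpleGraph V)
    (W₀ : Set V) (hfin : W₀.Finite) :
    ∀ r : ℕ, (cardUpd G)^[r] W₀ ≠ Set.univ := by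
  have key (r : ℕ) : FiniteWithFiniteDegrees G (stable G ((cardUpd G)^[r] W₀)) := by
    induction r with
    | zero => exact finiteWithFiniteDegrees_stable_of_finite hfin
    | succ r ih => simpa only [Function.iterate_succ_apply'] using ih.stable_cardUpd
  intro r hr
  have hfinite := (key r).1
  rw [hr, stable, cardUpd_univ, Set.inter_self] at hfinite
  exact Set.infinite_univ hfinite
end

section
/- In the ρ-model with ρ > 3, the quantity s_r = |S_r| + |(S_r, \bar{S_r})| is non-increasing in r, where S_r is the union of T_1,...,T_r, T_i is the set of vertices white at both rounds i and i-1, and (S_r, \bar{S_r}) is the set of edges with exactly one endpoint in S_r. -/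
open Finset

/-- The ρ-model update: a vertex with w white and b black neighbors becomes white
at the next round iff w > ρ·b. -/
noncomputable def rhoUpd {V : Type*} [Fintype V] [DecidableEq V] (ρ : ℝ)
    (G : SimpleGraph V) [DecidableRel G.Adj] (W : Finset V) : Finset V :=
  open scoped Classical in
  Finset.univ.filter fun v =>
    ρ * (((G.neighborFinset v) \ W).card : ℝ) < (((G.neighborFinset v) ∩ W).card : ℝ)

/-- Sᵣ = T₁ ∪ ... ∪ Tᵣ, where Tᵢ = Wᵢ ∩ Wᵢ₋₁. -/
noncomputable def rhoS {V : Type*} [Fintype V] [DecidableEq V] (ρ : ℝ)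
    (G : SimpleGraph V) [DecidableRel G.Adj] (W₀ : Finset V) (r : ℕ) : Finset V :=
  (Finset.range r).biUnion fun i =>
    (rhoUpd ρ G)^[i + 1] W₀ ∩ (rhoUpd ρ G)^[i] W₀

/-- The number of edges with exactly one endpoint in S. -/
def cutCard {V : Type*} [Fintype V] [DecidableEq V] (G : SimpleGraph V)
    [DecidableRel G.Adj] (S : Finset V) : ℕ :=
  ∑ v ∈ S, ((G.neighborFinset v) \ S).card

lemma mem_rhoUpd {V : Type*} [Fintype V] [DecidableEq V] {ρ : ℝ}
    {G : SimpleGraph V} [DecidableRel G.Adj] {W : Finset V} {v : V} :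
    v ∈ rhoUpd ρ G W ↔
      ρ * (((G.neighborFinset v) \ W).card : ℝ) < (((G.neighborFinset v) ∩ W).card : ℝ) := by
  classical
  simp [rhoUpd]

lemma rhoUpd_bound {V : Type*} [Fintype V] [DecidableEq V] {ρ : ℝ} (hρ : 3 < ρ)
    {G : SimpleGraph V} [DecidableRel G.Adj] {W : Finset V} {v : V}
    (hv : v ∈ rhoUpd ρ G W) :
    3 * ((G.neighborFinset v) \ W).card + 1 ≤ ((G.neighborFinset v) ∩ W).card := by
  rw [mem_rhoUpd] at hv
  have h3 : (3 : ℝ) * (((G.neighborFinset v) \ W).card : ℝ) ≤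
      ρ * (((G.neighborFinset v) \ W).card : ℝ) := by
    apply mul_le_mul_of_nonneg_right hρ.le (by positivity)
  have h : (3 : ℝ) * (((G.neighborFinset v) \ W).card : ℝ) <
      (((G.neighborFinset v) ∩ W).card : ℝ) := lt_of_le_of_lt h3 hv
  have h' : 3 * ((G.neighborFinset v) \ W).card < ((G.neighborFinset v) ∩ W).card := by
    exact_mod_cast h
  omega

lemma sum_inter_comm {V : Type*} [Fintype V] [DecidableEq V] (G : SimpleGraph V)
    [DecidableRel G.Adj] (S A : Finset V) :
    ∑ v ∈ S, ((G.neighborFinset v) ∩ A).card = ∑ v ∈ A, ((G.neighborFinset v) ∩ S).card := by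
  have h : ∀ X Y : Finset V, ∑ v ∈ X, ((G.neighborFinset v) ∩ Y).card
      = ∑ v ∈ X, ∑ u ∈ Y, if G.Adj v u then 1 else 0 := by
    intro X Y
    refine Finset.sum_congr rfl fun v _ => ?_
    have h1 : (G.neighborFinset v) ∩ Y = Y.filter fun u => G.Adj v u := by
      ext u
      simp [SimpleGraph.mem_neighborFinset, and_comm]
    rw [h1, Finset.card_filter]
  rw [h, h, Finset.sum_comm]
  exact Finset.sum_congr rfl fun u _ => Finset.sum_congr rfl fun w _ =>
    if_congr (G.adj_comm _ _) rfl rfl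

lemma cut_step {V : Type*} [Fintype V] [DecidableEq V] (G : SimpleGraph V)
    [DecidableRel G.Adj] (S A : Finset V) (hdisj : Disjoint S A)
    (hA : ∀ v ∈ A, 1 + ((G.neighborFinset v) \ (S ∪ A)).card ≤ ((G.neighborFinset v) ∩ S).card) :
    (S ∪ A).card + cutCard G (S ∪ A) ≤ S.card + cutCard G S := by
  rw [Finset.card_union_of_disjoint hdisj]
  unfold cutCard
  rw [Finset.sum_union hdisj]
  have hS : ∑ v ∈ S, ((G.neighborFinset v) \ S).card
      = ∑ v ∈ S, ((G.neighborFinset v) \ (S ∪ A)).card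
        + ∑ v ∈ A, ((G.neighborFinset v) ∩ S).card := by
    rw [← sum_inter_comm G S A, ← Finset.sum_add_distrib]
    refine Finset.sum_congr rfl fun v _ => ?_
    have h1 : (G.neighborFinset v) \ (S ∪ A) = ((G.neighborFinset v) \ S) \ A := by
      ext u; simp; tauto
    have h2 : ((G.neighborFinset v) \ S) ∩ A = (G.neighborFinset v) ∩ A := by
      ext u
      simp only [Finset.mem_inter, Finset.mem_sdiff]
      constructor
      · rintro ⟨⟨h, _⟩, h'⟩; exact ⟨h, h'⟩
      · rintro ⟨h, h'⟩; exact ⟨⟨h, Finset.disjoint_right.mp hdisj h'⟩, h'⟩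
    rw [h1, ← h2, Finset.card_sdiff_add_card_inter]
  have hsum : A.card + ∑ v ∈ A, ((G.neighborFinset v) \ (S ∪ A)).card
      ≤ ∑ v ∈ A, ((G.neighborFinset v) ∩ S).card := by
    rw [Finset.card_eq_sum_ones, ← Finset.sum_add_distrib]
    exact Finset.sum_le_sum hA
  omega

lemma key_vertex {V : Type*} [Fintype V] [DecidableEq V] {ρ : ℝ} (hρ : 3 < ρ)
    (G : SimpleGraph V) [DecidableRel G.Adj] (W₀ : Finset V) {r : ℕ} (hr : 1 ≤ r)
    {v : V} (hv1 : v ∈ (rhoUpd ρ G)^[r + 1] W₀) (hv0 : v ∈ (rhoUpd ρ G)^[r] W₀)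
    {X : Finset V} (hX : rhoS ρ G W₀ r ⊆ X) :
    1 + ((G.neighborFinset v) \ X).card ≤ ((G.neighborFinset v) ∩ rhoS ρ G W₀ r).card := by
  obtain ⟨k, rfl⟩ : ∃ k, r = k + 1 := ⟨r - 1, by omega⟩
  rw [Function.iterate_succ_apply'] at hv1 hv0
  set Wa := (rhoUpd ρ G)^[k + 1] W₀ with hWa
  set Wb := (rhoUpd ρ G)^[k] W₀ with hWb
  have h1 := rhoUpd_bound hρ hv1
  have h0 := rhoUpd_bound hρ hv0
  have hda : (G.neighborFinset v ∩ Wa).card + (G.neighborFinset v \ Wa).card = (G.neighborFinset v).card := Finset.card_inter_add_card_sdiff _ Wa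
  have hdb : (G.neighborFinset v ∩ Wb).card + (G.neighborFinset v \ Wb).card = (G.neighborFinset v).card := Finset.card_inter_add_card_sdiff _ Wb
  have hsub : Wa ∩ Wb ⊆ rhoS ρ G W₀ (k + 1) := by
    have := Finset.subset_biUnion_of_mem
      (fun i => (rhoUpd ρ G)^[i + 1] W₀ ∩ (rhoUpd ρ G)^[i] W₀)
      (Finset.self_mem_range_succ k)
    exact this
  have hcard : ((G.neighborFinset v ∩ Wa) ∩ (G.neighborFinset v ∩ Wb)).card + ((G.neighborFinset v ∩ Wa) ∪ (G.neighborFinset v ∩ Wb)).card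
      = (G.neighborFinset v ∩ Wa).card + (G.neighborFinset v ∩ Wb).card := Finset.card_inter_add_card_union _ _
  have huni : ((G.neighborFinset v ∩ Wa) ∪ (G.neighborFinset v ∩ Wb)).card ≤ (G.neighborFinset v).card :=
    Finset.card_le_card (Finset.union_subset Finset.inter_subset_left Finset.inter_subset_left)
  have hc : ((G.neighborFinset v ∩ Wa) ∩ (G.neighborFinset v ∩ Wb)).card ≤ (G.neighborFinset v ∩ rhoS ρ G W₀ (k + 1)).card := by
    refine Finset.card_le_card fun u hu => ?_
    simp only [Finset.mem_inter] at hu ⊢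
    exact ⟨hu.1.1, hsub (Finset.mem_inter.mpr ⟨hu.1.2, hu.2.2⟩)⟩
  have hX' : (G.neighborFinset v \ X).card + (G.neighborFinset v ∩ X).card = (G.neighborFinset v).card := Finset.card_sdiff_add_card_inter _ X
  have hXS : (G.neighborFinset v ∩ rhoS ρ G W₀ (k + 1)).card ≤ (G.neighborFinset v ∩ X).card :=
    Finset.card_le_card (Finset.inter_subset_inter le_rfl hX)
  omega

/-- In the ρ-model with ρ > 3, the quantity sᵣ = |Sᵣ| + |(Sᵣ, S̄ᵣ)| is
non-increasing in r (for r ≥ 1). -/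
theorem rho_s_antitone {V : Type*} [Fintype V] [DecidableEq V] (ρ : ℝ)
    (hirr : Irrational ρ) (hρ : 3 < ρ) (G : SimpleGraph V) [DecidableRel G.Adj]
    (hiso : ∀ v : V, 0 < G.degree v) (W₀ : Finset V) :
    ∀ r : ℕ, 1 ≤ r →
      (rhoS ρ G W₀ (r + 1)).card + cutCard G (rhoS ρ G W₀ (r + 1)) ≤
        (rhoS ρ G W₀ r).card + cutCard G (rhoS ρ G W₀ r) := by
  intro r hr
  set T := (rhoUpd ρ G)^[r + 1] W₀ ∩ (rhoUpd ρ G)^[r] W₀ with hT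
  have hun : rhoS ρ G W₀ (r + 1) = rhoS ρ G W₀ r ∪ (T \ rhoS ρ G W₀ r) := by
    simp only [rhoS, Finset.range_add_one, Finset.biUnion_insert]
    rw [Finset.union_sdiff_self_eq_union, Finset.union_comm]
  rw [hun]
  refine cut_step G _ _ Finset.disjoint_sdiff fun v hv => ?_
  have hvT : v ∈ T := (Finset.mem_sdiff.mp hv).1
  exact key_vertex hρ G W₀ hr (Finset.mem_inter.mp hvT).1 (Finset.mem_inter.mp hvT).2
    Finset.subset_union_left
end

section
/- In the ρ-model with ρ > 1, if a vertex v is white at both round r and round r-1, then more than a fraction (ρ-1)/(ρ+1) of its neighbors were white at both rounds r-1 and r-2 (i.e., belong to T_{r-1}), for r ≥ 2. -/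
open Finset

/-- In the ρ-model with ρ > 1, if v is white at rounds r and r-1 (r ≥ 2), then
more than a fraction (ρ-1)/(ρ+1) of its neighbors belong to Tᵣ₋₁. -/
theorem rho_neighbors_in_T {V : Type*} [Fintype V] [DecidableEq V] (ρ : ℝ)
    (hirr : Irrational ρ) (hρ : 1 < ρ) (G : SimpleGraph V) [DecidableRel G.Adj]
    (hiso : ∀ v : V, 0 < G.degree v) (W₀ : Finset V) (r : ℕ) (v : V)
    (hv : v ∈ (rhoUpd ρ G)^[r + 2] W₀ ∩ (rhoUpd ρ G)^[r + 1] W₀) :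
    (ρ - 1) / (ρ + 1) * (G.degree v : ℝ) <
      (((G.neighborFinset v) ∩
        ((rhoUpd ρ G)^[r + 1] W₀ ∩ (rhoUpd ρ G)^[r] W₀)).card : ℝ) := by
  classical
  set W1 := (rhoUpd ρ G)^[r + 1] W₀ with hW1
  set W2 := (rhoUpd ρ G)^[r] W₀ with hW2
  set N := G.neighborFinset v with hN
  rw [Finset.mem_inter] at hv
  obtain ⟨hv1, hv2⟩ := hv
  rw [show r + 2 = (r + 1) + 1 from rfl, Function.iterate_succ_apply', ← hW1] at hv1
  rw [hW1, Function.iterate_succ_apply', ← hW2] at hv2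
  simp only [rhoUpd, Finset.mem_filter] at hv1 hv2
  have h1 : ρ * ((N \ W1).card : ℝ) < ((N ∩ W1).card : ℝ) := hv1.2
  have h2 : ρ * ((N \ W2).card : ℝ) < ((N ∩ W2).card : ℝ) := hv2.2
  have hd1 : (N ∩ W1).card + (N \ W1).card = N.card := Finset.card_inter_add_card_sdiff N W1
  have hd2 : (N ∩ W2).card + (N \ W2).card = N.card := Finset.card_inter_add_card_sdiff N W2
  have hdeg : (G.degree v : ℝ) = (N.card : ℝ) := by
    rw [hN, SimpleGraph.card_neighborFinset_eq_degree]
  have hie : (N ∩ W1).card + (N ∩ W2).card ≤ (N ∩ (W1 ∩ W2)).card + N.card := by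
    have := Finset.card_inter_add_card_union (N ∩ W1) (N ∩ W2)
    have hsub : ((N ∩ W1) ∪ (N ∩ W2)).card ≤ N.card :=
      Finset.card_le_card (by intro x hx; rcases Finset.mem_union.mp hx with h | h <;>
        exact (Finset.mem_inter.mp h).1)
    have heq : (N ∩ W1) ∩ (N ∩ W2) = N ∩ (W1 ∩ W2) := by
      ext x; simp [Finset.mem_inter]; tauto
    rw [heq] at this
    omega
  have hie' : ((N ∩ W1).card : ℝ) + ((N ∩ W2).card : ℝ) ≤ ((N ∩ (W1 ∩ W2)).card : ℝ) + (N.card : ℝ) := by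
    exact_mod_cast hie
  have hd1' : ((N ∩ W1).card : ℝ) + ((N \ W1).card : ℝ) = (N.card : ℝ) := by exact_mod_cast hd1
  have hd2' : ((N ∩ W2).card : ℝ) + ((N \ W2).card : ℝ) = (N.card : ℝ) := by exact_mod_cast hd2
  rw [hdeg]
  have hρ1 : (0:ℝ) < ρ + 1 := by linarith
  rw [div_mul_eq_mul_div, div_lt_iff₀ hρ1]
  nlinarith [h1, h2, hd1', hd2', hie']
end

section
/- In the majority dynamics with ties resolved by retention, if a vertex v blinks at round 1 or round 2 (i.e., is white at all rounds of one fixed parity from that round on), and at some round r at least half of its neighbors are conquered (white at round r and all subsequent rounds), then v is conquered at round r+2. -/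
open Finset

/-- If a vertex blinks at round 1 or round 2, and at round r at least half of its
neighbors are conquered, then it is conquered at round r+2. -/
theorem blink_conquer {V : Type*} [Fintype V] [DecidableEq V] (G : SimpleGraph V)
    [DecidableRel G.Adj] (W₀ : Finset V) (v : V) (r : ℕ)
    (hblink : (∀ i : ℕ, v ∈ (majUpd G)^[1 + 2 * i] W₀) ∨
              (∀ i : ℕ, v ∈ (majUpd G)^[2 + 2 * i] W₀))
    (hhalf : G.degree v ≤
      2 * ((G.neighborSet v) ∩ {u | ∀ i : ℕ, u ∈ (majUpd G)^[r + i] W₀}).ncard) :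
    ∀ i : ℕ, v ∈ (majUpd G)^[r + 2 + i] W₀ := by
  have key : ∀ s, r ≤ s → v ∈ (majUpd G)^[s] W₀ → ∀ j, v ∈ (majUpd G)^[s + j] W₀ := by
    intro s hs hv j
    induction j with
    | zero => exact hv
    | succ j ih =>
      have hcard : G.degree v ≤ 2 * ((G.neighborFinset v) ∩ ((majUpd G)^[s + j] W₀)).card := by
        refine le_trans hhalf ?_
        have hsub : (G.neighborSet v ∩ {u | ∀ i : ℕ, u ∈ (majUpd G)^[r + i] W₀}) ⊆
            ↑((G.neighborFinset v) ∩ ((majUpd G)^[s + j] W₀)) := by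
          intro u hu
          simp only [Finset.coe_inter, Set.mem_inter_iff, Finset.mem_coe,
            SimpleGraph.mem_neighborFinset, Set.mem_setOf_eq,
            SimpleGraph.mem_neighborSet] at *
          refine ⟨hu.1, ?_⟩
          have := hu.2 (s + j - r)
          rwa [Nat.add_sub_cancel' (le_trans hs (Nat.le_add_right _ _))] at this
        have h2 := Set.ncard_le_ncard hsub (Finset.finite_toSet _)
        rw [Set.ncard_coe_finset] at h2
        omega
      have hmem : v ∈ majUpd G ((majUpd G)^[s + j] W₀) := by
        simp only [majUpd, Finset.mem_filter, Finset.mem_univ, true_and]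
        rcases lt_or_eq_of_le hcard with h | h
        · exact Or.inl h
        · exact Or.inr ⟨h, ih⟩
      rw [show s + (j + 1) = (s + j) + 1 from rfl, Function.iterate_succ_apply']
      exact hmem
  obtain ⟨s, hs1, hs2, hvs⟩ : ∃ s, r ≤ s ∧ s ≤ r + 2 ∧ v ∈ (majUpd G)^[s] W₀ := by
    rcases hblink with h | h
    · rcases Nat.even_or_odd r with ⟨k, hk⟩ | ⟨k, hk⟩
      · exact ⟨r + 1, by omega, by omega, by
          have := h k; rwa [show 1 + 2 * k = r + 1 by omega] at this⟩
      · exact ⟨r + 2, by omega, by omega, by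
          have := h (k + 1); rwa [show 1 + 2 * (k + 1) = r + 2 by omega] at this⟩
    · rcases Nat.even_or_odd r with ⟨k, hk⟩ | ⟨k, hk⟩
      · exact ⟨r + 2, by omega, by omega, by
          have := h k; rwa [show 2 + 2 * k = r + 2 by omega] at this⟩
      · exact ⟨r + 1, by omega, by omega, by
          have := h k; rwa [show 2 + 2 * k = r + 1 by omega] at this⟩
  intro i
  have := key s hs1 hvs (r + 2 + i - s)
  rwa [Nat.add_sub_cancel' (by omega)] at this
end
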